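/- Let u ∈ U, a > 0, and ũ the sup-inf regularization. If (x,y) is a point where both u and ũ are differentiable and ũ(x,y) < u(x,y), then (∂ũ/∂x)(x,y) > 0, (∂ũ/∂y)(x,y) > 0, and (∂ũ/∂x)(x,y)·(∂ũ/∂y)(x,y) ≥ a/4. -/

import Mathlib

open Set

/-- `u` belongs to the class `U`: doubly increasing on the nonnegative quadrant,
nonnegative there, and vanishing on the coordinate axes. -/
def MemU (u : ℝ × ℝ → ℝ) : Prop :=
  (∀ p q : ℝ × ℝ, 0 ≤ p.1 → 0 ≤ p.2 → p.1 ≤ q.1 → p.2 ≤ q.2 → u p ≤ u q) ∧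
  (∀ p : ℝ × ℝ, 0 ≤ p.1 → 0 ≤ p.2 → 0 ≤ u p) ∧
  (∀ t : ℝ, 0 ≤ t → u (0, t) = 0 ∧ u (t, 0) = 0)

/-- The regularization `ũ_{z,p}(x,y)`. -/
noncomputable def tzp (u : ℝ × ℝ → ℝ) (a z p x y : ℝ) : ℝ :=
  sInf ((fun q : ℝ × ℝ => z + p * (x - q.1) + (a / p) * (y - q.2)) ''
    {q : ℝ × ℝ | 0 ≤ q.1 ∧ q.1 ≤ x ∧ 0 ≤ q.2 ∧ q.2 ≤ y ∧ u q ≤ z})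

/-- The regularization `ũ_z(x,y) = sup_{p>0} ũ_{z,p}(x,y)`. -/
noncomputable def tz (u : ℝ × ℝ → ℝ) (a z x y : ℝ) : ℝ :=
  sSup ((fun p => tzp u a z p x y) '' Ioi 0)

/-- The regularization `ũ(x,y) = inf_{z≥0} ũ_z(x,y)`. -/
noncomputable def tu (u : ℝ × ℝ → ℝ) (a x y : ℝ) : ℝ :=
  sInf ((fun z => tz u a z x y) '' Ici 0)

open Filter Topology

/-!
If `z < u (x, y)`, no point of the sublevel set `{u ≤ z}` dominates `(x, y)`, so when the corner
of the box moves from `(x, y)` to `(x + dx, y + dy)` every admissible point gains either `p dx` or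
`(a / p) dy`. Rescaling `p` suitably turns this into a gain of `√(a dx dy)` for `ũ_z`. Since
`ũ ≤ ũ_z` for every `z` and `ũ_z ≥ z`, the same gain holds for `ũ` as long as it keeps `ũ`
below `u (x, y)`, i.e. for small steps. Hence along every direction `(l, m)` with `l, m > 0`,
`l ∂ₓũ + m ∂ᵧũ ≥ √(a l m)`; this forces both partials to be positive, and the direction
`(∂ᵧũ, ∂ₓũ)` gives `∂ₓũ ∂ᵧũ ≥ a / 4`.
-/

lemma MemU.comp_swap {u : ℝ × ℝ → ℝ} (hu : MemU u) : MemU (u ∘ Prod.swap) :=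
  ⟨fun p q hp₁ hp₂ h₁ h₂ => hu.1 p.swap q.swap hp₂ hp₁ h₂ h₁,
    fun p hp₁ hp₂ => hu.2.1 p.swap hp₂ hp₁,
    fun t ht => ⟨(hu.2.2 t ht).2, (hu.2.2 t ht).1⟩⟩

section Regularization

variable {u : ℝ × ℝ → ℝ} {a z p x y : ℝ}

def sublevelBox (u : ℝ × ℝ → ℝ) (z x y : ℝ) : Set (ℝ × ℝ) :=
  {q | 0 ≤ q.1 ∧ q.1 ≤ x ∧ 0 ≤ q.2 ∧ q.2 ≤ y ∧ u q ≤ z}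

lemma zero_mem_sublevelBox (hu : MemU u) (hz : 0 ≤ z) (hx : 0 ≤ x) (hy : 0 ≤ y) :
    (0, 0) ∈ sublevelBox u z x y :=
  ⟨le_rfl, hx, le_rfl, hy, (hu.2.2 0 le_rfl).1.trans_le hz⟩

lemma sublevelBox_comp_swap :
    sublevelBox (u ∘ Prod.swap) z y x = Prod.swap ⁻¹' sublevelBox u z x y := by
  ext q
  simp only [sublevelBox, mem_ofPred_eq, mem_preimage, Function.comp_apply, Prod.fst_swap,
    Prod.snd_swap]
  tauto

lemma le_add_of_mem_sublevelBox (ha : 0 ≤ a) (hp : 0 < p) {q : ℝ × ℝ}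
    (hq : q ∈ sublevelBox u z x y) : z ≤ z + p * (x - q.1) + a / p * (y - q.2) := by
  have h₁ : 0 ≤ p * (x - q.1) := mul_nonneg hp.le (sub_nonneg.2 hq.2.1)
  have h₂ : 0 ≤ a / p * (y - q.2) := mul_nonneg (by positivity) (sub_nonneg.2 hq.2.2.2.1)
  linarith

lemma tzp_le (ha : 0 ≤ a) (hp : 0 < p) {q : ℝ × ℝ} (hq : q ∈ sublevelBox u z x y) :
    tzp u a z p x y ≤ z + p * (x - q.1) + a / p * (y - q.2) :=
  csInf_le ⟨z, forall_mem_image.2 fun _ hq' => le_add_of_mem_sublevelBox ha hp hq'⟩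
    (mem_image_of_mem _ hq)

lemma le_tzp_of_forall_le (hu : MemU u) (hz : 0 ≤ z) (hx : 0 ≤ x) (hy : 0 ≤ y) {w : ℝ}
    (h : ∀ q ∈ sublevelBox u z x y, w ≤ z + p * (x - q.1) + a / p * (y - q.2)) :
    w ≤ tzp u a z p x y :=
  le_csInf ⟨_, mem_image_of_mem _ (zero_mem_sublevelBox hu hz hx hy)⟩ (forall_mem_image.2 h)

lemma le_tzp (hu : MemU u) (ha : 0 ≤ a) (hz : 0 ≤ z) (hp : 0 < p) (hx : 0 ≤ x) (hy : 0 ≤ y) :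
    z ≤ tzp u a z p x y :=
  le_tzp_of_forall_le hu hz hx hy fun _ hq => le_add_of_mem_sublevelBox ha hp hq

lemma tzp_le_add (hu : MemU u) (ha : 0 ≤ a) (hz : 0 ≤ z) (hp : 0 < p) (hx : 0 ≤ x)
    (hy : 0 ≤ y) : tzp u a z p x y ≤ z + x + a * y := by
  rcases le_total p 1 with hp₁ | hp₁
  · have h := tzp_le (a := a) ha hp
      (show ((0 : ℝ), y) ∈ sublevelBox u z x y from
        ⟨le_rfl, hx, hy, le_rfl, (hu.2.2 y hy).1.trans_le hz⟩)
    have : p * x ≤ x := mul_le_of_le_one_left hx hp₁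
    simp only [sub_zero, sub_self, mul_zero, add_zero] at h
    linarith [mul_nonneg ha hy]
  · have h := tzp_le (a := a) ha hp
      (show (x, (0 : ℝ)) ∈ sublevelBox u z x y from
        ⟨hx, le_rfl, le_rfl, hy, (hu.2.2 x hx).2.trans_le hz⟩)
    have : a / p * y ≤ a * y := mul_le_mul_of_nonneg_right (div_le_self ha hp₁) hy
    simp only [sub_zero, sub_self, mul_zero, add_zero] at h
    linarith

lemma tzp_comp_swap (ha : a ≠ 0) : tzp (u ∘ Prod.swap) a z p y x = tzp u a z (a / p) x y := by
  change sInf (_ '' sublevelBox _ z y x) = sInf (_ '' sublevelBox u z x y)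
  rw [sublevelBox_comp_swap, ← image_swap_eq_preimage_swap, image_image, div_div_cancel₀ ha]
  congr 1
  refine image_congr fun q _ => ?_
  simp only [Prod.fst_swap, Prod.snd_swap]
  ring

lemma tz_bddAbove (hu : MemU u) (ha : 0 ≤ a) (hz : 0 ≤ z) (hx : 0 ≤ x) (hy : 0 ≤ y) :
    BddAbove ((fun p => tzp u a z p x y) '' Ioi 0) :=
  ⟨z + x + a * y, forall_mem_image.2 fun _ hp => tzp_le_add hu ha hz hp hx hy⟩

lemma tzp_le_tz (hu : MemU u) (ha : 0 ≤ a) (hz : 0 ≤ z) (hp : 0 < p) (hx : 0 ≤ x)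
    (hy : 0 ≤ y) : tzp u a z p x y ≤ tz u a z x y :=
  le_csSup (tz_bddAbove hu ha hz hx hy) (mem_image_of_mem _ hp)

lemma le_tz (hu : MemU u) (ha : 0 ≤ a) (hz : 0 ≤ z) (hx : 0 ≤ x) (hy : 0 ≤ y) :
    z ≤ tz u a z x y :=
  (le_tzp hu ha hz one_pos hx hy).trans (tzp_le_tz hu ha hz one_pos hx hy)

lemma tu_le_tz (hu : MemU u) (ha : 0 ≤ a) (hz : 0 ≤ z) (hx : 0 ≤ x) (hy : 0 ≤ y) :
    tu u a x y ≤ tz u a z x y :=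
  csInf_le ⟨0, forall_mem_image.2 fun _ hz' => le_trans hz' (le_tz hu ha hz' hx hy)⟩
    (mem_image_of_mem _ hz)

lemma exists_mul_add_eq_and_mul_add_le {c d α β : ℝ} (hc : 0 ≤ c) (hd : 0 < d) (hα : 0 < α)
    (hβα : β ≤ α) (hd2 : d ^ 2 = α * β) :
    ∃ s, 0 < s ∧ s ≤ 1 ∧ s * (c + α) = c + d ∧ s * (c + d) ≤ c + β := by
  have hcα : 0 < c + α := by positivity
  have hdα : d ≤ α := by nlinarith
  refine ⟨(c + d) / (c + α), by positivity, div_le_one_of_le₀ (by linarith) hcα.le,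
    div_mul_cancel₀ _ hcα.ne', ?_⟩
  have hamgm : 2 * d ≤ α + β := by nlinarith [sq_nonneg (α - β)]
  rw [div_mul_eq_mul_div, div_le_iff₀ hcα]
  nlinarith [mul_nonneg hc (sub_nonneg.2 hamgm)]

lemma exists_tzp_add_sqrt_le_of_le (hu : MemU u) (ha : 0 < a) (hz : 0 ≤ z) (hx : 0 ≤ x)
    (hy : 0 ≤ y) (hzu : z < u (x, y)) {p₀ dx dy : ℝ} (hp₀ : 0 < p₀) (hdx : 0 < dx)
    (hdy : 0 < dy) (hβα : a / p₀ * dy ≤ p₀ * dx) :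
    ∃ p₁ > 0, tzp u a z p₀ x y + √(a * dx * dy) ≤ tzp u a z p₁ (x + dx) (y + dy) := by
  set c := tzp u a z p₀ x y - z
  have hcq : ∀ q ∈ sublevelBox u z x y, c ≤ p₀ * (x - q.1) + a / p₀ * (y - q.2) :=
    fun q hq => by linarith [tzp_le ha.le hp₀ hq]
  have hd2 : √(a * dx * dy) ^ 2 = p₀ * dx * (a / p₀ * dy) := by
    rw [Real.sq_sqrt (by positivity)]
    field_simp
  -- Shrinking `p₀` by the factor `s` costs at most `(1 - s) c` on points with `q.1 ≤ x`, and
  -- the gain `s p₀ dx = (1 - s) c + √(a dx dy)` makes up for it; points with `q.1 > x` lie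
  -- below height `y` and gain `(a / p₀) dy / s`.
  obtain ⟨s, hs₀, hs₁, hs, hgain⟩ := exists_mul_add_eq_and_mul_add_le
    (sub_nonneg.2 (le_tzp hu ha.le hz hp₀ hx hy)) (Real.sqrt_pos.2 (by positivity))
    (mul_pos hp₀ hdx) hβα hd2
  refine ⟨s * p₀, by positivity, le_tzp_of_forall_le hu hz (by linarith) (by linarith) ?_⟩
  rintro q ⟨hq₁, hqx, hq₂, hqy, hqz⟩
  rw [div_mul_eq_div_div_swap]
  have hap₀ : 0 ≤ a / p₀ := by positivity
  rcases le_or_gt q.1 x with h₁ | h₁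
  · have hold := hcq (q.1, min q.2 y) ⟨hq₁, h₁, le_min hq₂ hy, min_le_right _ _,
      (hu.1 (q.1, min q.2 y) q hq₁ (le_min hq₂ hy) le_rfl (min_le_left _ _)).trans hqz⟩
    set K := a / p₀ * (y - min q.2 y)
    have hK : 0 ≤ K := mul_nonneg hap₀ (sub_nonneg.2 (min_le_right _ _))
    have hKs : K ≤ a / p₀ / s * (y + dy - q.2) :=
      calc K ≤ a / p₀ * (y + dy - q.2) := by
            have : q.2 - dy ≤ min q.2 y := le_min (by linarith) (by linarith)
            exact mul_le_mul_of_nonneg_left (by linarith) hap₀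
        _ ≤ a / p₀ / s * (y + dy - q.2) :=
            mul_le_mul_of_nonneg_right (le_div_self hap₀ hs₀ hs₁) (by linarith)
    have : s * c ≤ s * (p₀ * (x - q.1)) + s * K := by
      rw [← mul_add]
      exact mul_le_mul_of_nonneg_left hold hs₀.le
    linarith [mul_le_of_le_one_left hK hs₁]
  · have h₂ : q.2 ≤ y := by
      by_contra! h₂
      exact (hzu.trans_le (hu.1 (x, y) q hx hy h₁.le h₂.le)).not_ge hqz
    have hold := hcq (x, q.2) ⟨hx, le_rfl, hq₂, h₂, (hu.1 (x, q.2) q hx hq₂ h₁.le le_rfl).trans hqz⟩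
    simp only [sub_self, mul_zero, zero_add] at hold
    have : c + √(a * dx * dy) ≤ a / p₀ / s * (y + dy - q.2) := by
      rw [div_mul_eq_mul_div, le_div_iff₀ hs₀]
      linarith
    have : 0 ≤ s * p₀ * (x + dx - q.1) := mul_nonneg (by positivity) (by linarith)
    linarith

lemma exists_tzp_add_sqrt_le (hu : MemU u) (ha : 0 < a) (hz : 0 ≤ z) (hx : 0 ≤ x) (hy : 0 ≤ y)
    (hzu : z < u (x, y)) {p₀ dx dy : ℝ} (hp₀ : 0 < p₀) (hdx : 0 < dx) (hdy : 0 < dy) :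
    ∃ p₁ > 0, tzp u a z p₀ x y + √(a * dx * dy) ≤ tzp u a z p₁ (x + dx) (y + dy) := by
  rcases le_total (a / p₀ * dy) (p₀ * dx) with hβα | hαβ
  · exact exists_tzp_add_sqrt_le_of_le hu ha hz hx hy hzu hp₀ hdx hdy hβα
  obtain ⟨p₁, hp₁, h⟩ := exists_tzp_add_sqrt_le_of_le hu.comp_swap ha hz hy hx hzu
    (div_pos ha hp₀) hdy hdx (by rwa [div_div_cancel₀ ha.ne'])
  refine ⟨a / p₁, div_pos ha hp₁, ?_⟩
  rwa [tzp_comp_swap ha.ne', tzp_comp_swap ha.ne', div_div_cancel₀ ha.ne', mul_right_comm] at h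

lemma tz_add_sqrt_le (hu : MemU u) (ha : 0 < a) (hz : 0 ≤ z) (hx : 0 ≤ x) (hy : 0 ≤ y)
    (hzu : z < u (x, y)) {dx dy : ℝ} (hdx : 0 < dx) (hdy : 0 < dy) :
    tz u a z x y + √(a * dx * dy) ≤ tz u a z (x + dx) (y + dy) := by
  rw [← le_sub_iff_add_le]
  refine csSup_le (nonempty_Ioi.image _) (forall_mem_image.2 fun p₀ hp₀ => ?_)
  obtain ⟨p₁, hp₁, h⟩ := exists_tzp_add_sqrt_le hu ha hz hx hy hzu hp₀ hdx hdy
  exact le_sub_iff_add_le.2 (h.trans (tzp_le_tz hu ha.le hz hp₁ (by linarith) (by linarith)))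

lemma tu_add_sqrt_le (hu : MemU u) (ha : 0 < a) (hx : 0 ≤ x) (hy : 0 ≤ y) {dx dy : ℝ}
    (hdx : 0 < dx) (hdy : 0 < dy) (hgap : tu u a x y + √(a * dx * dy) ≤ u (x, y)) :
    tu u a x y + √(a * dx * dy) ≤ tu u a (x + dx) (y + dy) := by
  refine le_csInf (nonempty_Ici.image _) (forall_mem_image.2 fun z hz => ?_)
  rcases lt_or_ge z (u (x, y)) with hzu | hzu
  · exact (add_le_add_left (tu_le_tz hu ha.le hz hx hy) _).trans
      (tz_add_sqrt_le hu ha hz hx hy hzu hdx hdy)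
  · exact hgap.trans (hzu.trans (le_tz hu ha.le hz (by linarith) (by linarith)))

lemma eventually_tu_add_mul_sqrt_le (hu : MemU u) (ha : 0 < a) (hx : 0 ≤ x) (hy : 0 ≤ y)
    (hlt : tu u a x y < u (x, y)) {l m : ℝ} (hl : 0 < l) (hm : 0 < m) :
    ∀ᶠ t in 𝓝[>] 0, tu u a x y + t * √(a * l * m) ≤ tu u a (x + t * l) (y + t * m) := by
  have hsmall : ∀ᶠ t in 𝓝[>] (0 : ℝ), t * √(a * l * m) < u (x, y) - tu u a x y :=
    (((continuous_mul_const _).tendsto' 0 0 (zero_mul _)).mono_left nhdsWithin_le_nhds).eventually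
      (gt_mem_nhds (sub_pos.2 hlt))
  filter_upwards [hsmall, self_mem_nhdsWithin] with t ht_small (ht : 0 < t)
  have hsqrt : √(a * (t * l) * (t * m)) = t * √(a * l * m) := by
    rw [show a * (t * l) * (t * m) = t ^ 2 * (a * l * m) by ring, Real.sqrt_mul (sq_nonneg t),
      Real.sqrt_sq ht.le]
  have h := tu_add_sqrt_le hu ha hx hy (mul_pos ht hl) (mul_pos ht hm) (by rw [hsqrt]; linarith)
  rwa [hsqrt] at h

end Regularization

lemma HasDerivAt.le_of_eventually_add_mul_le {g : ℝ → ℝ} {g' k x : ℝ} (hg : HasDerivAt g g' x)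
    (h : ∀ᶠ t in 𝓝[>] 0, g x + t * k ≤ g (x + t)) : k ≤ g' :=
  ge_of_tendsto hg.tendsto_slope_zero_right <| (h.and self_mem_nhdsWithin).mono
    fun t ⟨ht, (ht₀ : 0 < t)⟩ => by
      rw [smul_eq_mul, le_inv_mul_iff₀ ht₀]
      linarith

lemma pos_of_forall_sqrt_mul_le_mul_add {a α β : ℝ} (ha : 0 < a)
    (h : ∀ l : ℝ, 0 < l → √(a * l) ≤ l * α + β) : 0 < α := by
  by_contra! hα
  have hl : 0 < (|β| + 1) ^ 2 / a := by positivity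
  have h₁ := h _ hl
  rw [mul_div_cancel₀ _ ha.ne', Real.sqrt_sq (by positivity)] at h₁
  nlinarith [le_abs_self β, mul_nonpos_of_nonneg_of_nonpos hl.le hα]

lemma pos_pos_div_four_le_mul_of_forall_sqrt_le {a α β : ℝ} (ha : 0 < a)
    (h : ∀ l m : ℝ, 0 < l → 0 < m → √(a * l * m) ≤ l * α + m * β) :
    0 < α ∧ 0 < β ∧ a / 4 ≤ α * β := by
  have hα : 0 < α := pos_of_forall_sqrt_mul_le_mul_add ha fun l hl => by
    simpa using h l 1 hl one_pos
  have hβ : 0 < β := pos_of_forall_sqrt_mul_le_mul_add ha fun m hm => by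
    simpa [mul_comm, add_comm] using h 1 m one_pos hm
  refine ⟨hα, hβ, ?_⟩
  have h₁ := (Real.sqrt_le_left (by positivity)).1 (h β α hβ hα)
  nlinarith [mul_pos hα hβ]

lemma partials_pos_and_div_four_le_mul {f : ℝ × ℝ → ℝ} {a x y : ℝ} (ha : 0 < a)
    (hf : DifferentiableAt ℝ f (x, y))
    (hgrowth : ∀ l m : ℝ, 0 < l → 0 < m →
      ∀ᶠ t in 𝓝[>] 0, f (x, y) + t * √(a * l * m) ≤ f (x + t * l, y + t * m)) :
    0 < deriv (fun t => f (t, y)) x ∧ 0 < deriv (fun t => f (x, t)) y ∧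
      a / 4 ≤ deriv (fun t => f (t, y)) x * deriv (fun t => f (x, t)) y := by
  obtain ⟨L, hL⟩ := hf
  have hx : HasDerivAt (fun t => f (t, y)) (L (1, 0)) x :=
    hL.comp_hasDerivAt x ((hasDerivAt_id x).prodMk (hasDerivAt_const x y))
  have hy : HasDerivAt (fun t => f (x, t)) (L (0, 1)) y :=
    hL.comp_hasDerivAt y ((hasDerivAt_const y x).prodMk (hasDerivAt_id y))
  rw [hx.deriv, hy.deriv]
  refine pos_pos_div_four_le_mul_of_forall_sqrt_le ha fun l m hl hm => ?_
  have hdir : L (l, m) = l * L (1, 0) + m * L (0, 1) := by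
    rw [show ((l, m) : ℝ × ℝ) = l • ((1 : ℝ), (0 : ℝ)) + m • ((0 : ℝ), (1 : ℝ)) by simp,
      map_add, map_smul, map_smul, smul_eq_mul, smul_eq_mul]
  rw [← hdir]
  refine (hL.hasLineDerivAt (l, m)).le_of_eventually_add_mul_le ?_
  simpa [mul_comm] using hgrowth l m hl hm

theorem stmt_14_general (u : ℝ × ℝ → ℝ) (hu : MemU u) (a : ℝ) (ha : 0 < a)
    (x y : ℝ) (hx : 0 ≤ x) (hy : 0 ≤ y)
    (hdt : DifferentiableAt ℝ (fun q : ℝ × ℝ => tu u a q.1 q.2) (x, y))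
    (hlt : tu u a x y < u (x, y)) :
    0 < deriv (fun t => tu u a t y) x ∧ 0 < deriv (fun t => tu u a x t) y ∧
      a / 4 ≤ deriv (fun t => tu u a t y) x * deriv (fun t => tu u a x t) y :=
  partials_pos_and_div_four_le_mul ha hdt fun _ _ hl hm =>
    eventually_tu_add_mul_sqrt_le hu ha hx hy hlt hl hm

theorem stmt_14 (u : ℝ × ℝ → ℝ) (hu : MemU u) (a : ℝ) (ha : 0 < a)
    (x y : ℝ) (hx : 0 ≤ x) (hy : 0 ≤ y)
    (hdu : DifferentiableAt ℝ u (x, y))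
    (hdt : DifferentiableAt ℝ (fun q : ℝ × ℝ => tu u a q.1 q.2) (x, y))
    (hlt : tu u a x y < u (x, y)) :
    0 < deriv (fun t => tu u a t y) x ∧ 0 < deriv (fun t => tu u a x t) y ∧
      a / 4 ≤ deriv (fun t => tu u a t y) x * deriv (fun t => tu u a x t) y :=
  stmt_14_general u hu a ha x y hx hy hdt hlt
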